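/- Let S be a countable state space, κ a Markov transition kernel on S, and for each initial state s let P_s denote the law of the homogeneous Markov chain (X_t)_{t≥0} with X_0 = s and transitions κ, with E_s the corresponding expectation. Fix a target set G ⊆ S and write D_G for the first hitting time of G at a positive time, valued in ℕ ∪ {∞} ⊆ [0, ∞]. Then the expected hitting time satisfies the Bellman-style recursion in the extended reals: E_s[D_G] = 1 + Σ_{s' ∉ G} κ(s)({s'}) · E_{s'}[D_G], where the sum is over states outside G (states s' ∈ G contribute 0, matching the convention D = 0 upon reaching the target). -/
import Mathlib


open MeasureTheory ProbabilityTheory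
open scoped Classical ENNReal

private lemma enat_coe_eq_tsum (m : ℕ∞) :
    (m : ℝ≥0∞) = ∑' t : ℕ, if (t : ℕ∞) < m then (1 : ℝ≥0∞) else 0 := by
  cases m with
  | top =>
    rw [ENat.toENNReal_top]
    have h : ∀ t : ℕ, (if (t : ℕ∞) < ⊤ then (1 : ℝ≥0∞) else 0) = 1 := by
      intro t; simp [lt_top_iff_ne_top]
    rw [tsum_congr h]
    simp [ENNReal.tsum_const_eq_top_of_ne_zero]
  | coe n =>
    rw [ENat.toENNReal_coe]
    have h : ∀ t : ℕ, (if (t : ℕ∞) < (n : ℕ∞) then (1 : ℝ≥0∞) else 0)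
        = if t < n then (1 : ℝ≥0∞) else 0 := by
      intro t; simp [Nat.cast_lt]
    rw [tsum_congr h]
    rw [tsum_eq_sum (s := Finset.range n) (by intro b hb; simp at hb; simp [hb])]
    have hall : ∀ x ∈ Finset.range n, x < n := fun x hx => Finset.mem_range.mp hx
    simp [Finset.filter_true_of_mem hall]


noncomputable def hittingW {S : Type*} [MeasurableSpace S] (κ : Kernel S S) (G : Set S) :
    ℕ → S → ℝ≥0∞
  | 0, _ => 1
  | (t+1), s => ∑' s' : S, if s' ∉ G then κ s {s'} * hittingW κ G t s' else 0

private lemma tn_eq_w {S : Type*} [MeasurableSpace S] (κ : Kernel S S) (G : Set S) :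
    ∀ (t : ℕ) (s : S),
    (∑' f : Fin (t+1) → S,
      if (f 0 = s ∧ ∀ i : Fin (t+1), 1 ≤ (i : ℕ) → f i ∉ G) then
        ∏ i : Fin t, κ (f i.castSucc) {f i.succ} else 0)
      = hittingW κ G t s := by
  intro t
  induction t with
  | zero =>
    intro s
    have h : ∀ f : Fin 1 → S,
        (if (f 0 = s ∧ ∀ i : Fin 1, 1 ≤ (i : ℕ) → f i ∉ G) then
          ∏ i : Fin 0, κ (f i.castSucc) {f i.succ} else 0)
        = if f 0 = s then 1 else 0 := by
      intro f
      have h1 : (∀ i : Fin 1, 1 ≤ (i : ℕ) → f i ∉ G) := by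
        intro i hi
        exact absurd hi (by have := i.isLt; omega)
      simp [h1]
    rw [tsum_congr h]
    have := (Equiv.funUnique (Fin 1) S).tsum_eq (fun x : S => if x = s then (1:ℝ≥0∞) else 0)
    rw [show (fun f : Fin 1 → S => if f 0 = s then (1:ℝ≥0∞) else 0)
        = fun f : Fin 1 → S => if (Equiv.funUnique (Fin 1) S) f = s then (1:ℝ≥0∞) else 0 from rfl,
      this, tsum_ite_eq]
    rfl
  | succ t ih =>
    intro s
    -- peel off the first coordinate
    have hsplit : (∑' f : Fin (t+1+1) → S,
        if (f 0 = s ∧ ∀ i : Fin (t+1+1), 1 ≤ (i : ℕ) → f i ∉ G) then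
          ∏ i : Fin (t+1), κ (f i.castSucc) {f i.succ} else 0)
        = ∑' (x : S) (g : Fin (t+1) → S),
            (fun f : Fin (t+1+1) → S =>
              if (f 0 = s ∧ ∀ i : Fin (t+1+1), 1 ≤ (i : ℕ) → f i ∉ G) then
                ∏ i : Fin (t+1), κ (f i.castSucc) {f i.succ} else 0) (Fin.cons x g) := by
      rw [← (Fin.consEquiv (fun _ : Fin (t+1+1) => S)).tsum_eq, ← ENNReal.tsum_prod]
      rfl
    rw [hsplit]
    simp only []
    have hcons : ∀ (x : S) (g : Fin (t+1) → S),
        (if ((Fin.cons x g : Fin (t+2) → S) 0 = s ∧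
              ∀ i : Fin (t+2), 1 ≤ (i : ℕ) → (Fin.cons x g : Fin (t+2) → S) i ∉ G) then
            ∏ i : Fin (t+1), κ ((Fin.cons x g : Fin (t+2) → S) i.castSucc)
              {(Fin.cons x g : Fin (t+2) → S) i.succ} else 0)
        = if x = s then
            (if (g 0 ∉ G ∧ ∀ j : Fin (t+1), 1 ≤ (j : ℕ) → g j ∉ G) then
              κ x {g 0} * ∏ i : Fin t, κ (g i.castSucc) {g i.succ} else 0) else 0 := by
      intro x g
      rw [← ite_and]
      have hc : ((Fin.cons x g : Fin (t+2) → S) 0 = s ∧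
            ∀ i : Fin (t+2), 1 ≤ (i : ℕ) → (Fin.cons x g : Fin (t+2) → S) i ∉ G)
          ↔ (x = s ∧ g 0 ∉ G ∧ ∀ j : Fin (t+1), 1 ≤ (j : ℕ) → g j ∉ G) := by
        constructor
        · rintro ⟨h0, hall⟩
          refine ⟨by simpa using h0, by simpa using hall (Fin.succ 0) (by simp), ?_⟩
          intro j hj
          simpa using hall j.succ (by simp)
        · rintro ⟨h0, hg0, hrest⟩
          refine ⟨by simpa using h0, ?_⟩
          intro i hi
          induction i using Fin.cases with
          | zero => simp at hi
          | succ j =>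
            rw [Fin.cons_succ]
            rcases Nat.eq_zero_or_pos (j : ℕ) with hj | hj
            · have : j = 0 := Fin.ext hj
              rw [this]; exact hg0
            · exact hrest j hj
      have hv : (∏ i : Fin (t+1), κ ((Fin.cons x g : Fin (t+2) → S) i.castSucc)
            {(Fin.cons x g : Fin (t+2) → S) i.succ})
          = κ x {g 0} * ∏ i : Fin t, κ (g i.castSucc) {g i.succ} := by
        rw [Fin.prod_univ_succ]
        have h2 : ∀ i : Fin t, κ ((Fin.cons x g : Fin (t+2) → S) i.succ.castSucc)
              {(Fin.cons x g : Fin (t+2) → S) i.succ.succ}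
            = κ (g i.castSucc) {g i.succ} := by
          intro i
          rw [← Fin.succ_castSucc, Fin.cons_succ, Fin.cons_succ]
        rw [Finset.prod_congr rfl fun i _ => h2 i]
        congr 1
      exact if_congr hc hv rfl
    rw [tsum_congr fun x => tsum_congr fun g => hcons x g]
    rw [tsum_eq_single s (by intro x hx; simp [hx])]
    simp only [if_pos rfl]
    have hrhs : ∀ s' : S, (if s' ∉ G then κ s {s'} * hittingW κ G t s' else 0)
        = ∑' g : Fin (t+1) → S, if g 0 = s' then
            (if (g 0 ∉ G ∧ ∀ j : Fin (t+1), 1 ≤ (j : ℕ) → g j ∉ G) then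
              κ s {g 0} * ∏ i : Fin t, κ (g i.castSucc) {g i.succ} else 0) else 0 := by
      intro s'
      by_cases hs' : s' ∉ G
      · rw [if_pos hs', ← ih s', ← ENNReal.tsum_mul_left]
        refine tsum_congr fun g => ?_
        by_cases h0 : g 0 = s'
        · subst h0
          by_cases h2 : ∀ j : Fin (t+1), 1 ≤ (j : ℕ) → g j ∉ G
          · simp [hs', h2]
          · simp [h2]
        · simp [h0]
      · rw [if_neg hs']
        symm
        have hz : ∀ g : Fin (t+1) → S, (if g 0 = s' then
            (if (g 0 ∉ G ∧ ∀ j : Fin (t+1), 1 ≤ (j : ℕ) → g j ∉ G) then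
              κ s {g 0} * ∏ i : Fin t, κ (g i.castSucc) {g i.succ} else 0) else 0) = 0 := by
          intro g
          by_cases h0 : g 0 = s'
          · rw [if_pos h0, if_neg]
            rintro ⟨hg, -⟩
            rw [not_not] at hs'
            exact hg (h0 ▸ hs')
          · rw [if_neg h0]
        rw [tsum_congr hz]
        exact tsum_zero
    have hWdef : hittingW κ G (t+1) s
        = ∑' s' : S, if s' ∉ G then κ s {s'} * hittingW κ G t s' else 0 := rfl
    rw [hWdef, tsum_congr hrhs, ENNReal.tsum_comm]
    refine tsum_congr fun g => ?_
    symm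
    rw [tsum_eq_single (g 0) (fun s' hs' => if_neg fun h => hs' h.symm)]
    simp


private lemma measure_avoid {S : Type*} [MeasurableSpace S] [Countable S]
    [MeasurableSingletonClass S]
    (κ : Kernel S S) (P : S → Measure (ℕ → S))
    (hP : ∀ (s : S) (n : ℕ) (f : ℕ → S),
      P s {ω | ∀ i ≤ n, ω i = f i}
        = (if f 0 = s then 1 else 0) * ∏ i ∈ Finset.range n, κ (f i) {f (i + 1)})
    (G : Set S) (t : ℕ) (s : S) :
    P s {ω : ℕ → S | ∀ i : ℕ, 1 ≤ i → i ≤ t → ω i ∉ G}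
      = ∑' f : Fin (t+1) → S,
          if (f 0 = s ∧ ∀ i : Fin (t+1), 1 ≤ (i : ℕ) → f i ∉ G) then
            ∏ i : Fin t, κ (f i.castSucc) {f i.succ} else 0 := by
  have hGm : MeasurableSet G := (Set.to_countable G).measurableSet
  set A : Set (ℕ → S) := {ω : ℕ → S | ∀ i : ℕ, 1 ≤ i → i ≤ t → ω i ∉ G} with hA
  have hAm : MeasurableSet A := by
    have : A = ⋂ (i : ℕ), {ω : ℕ → S | 1 ≤ i → i ≤ t → ω i ∉ G} := by
      ext ω; simp [hA, Set.mem_iInter]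
    rw [this]
    refine MeasurableSet.iInter fun i => ?_
    by_cases h1 : 1 ≤ i
    · by_cases h2 : i ≤ t
      · have : {ω : ℕ → S | 1 ≤ i → i ≤ t → ω i ∉ G}
            = (fun ω : ℕ → S => ω i) ⁻¹' Gᶜ := by
          ext ω; simp [h1, h2]
        rw [this]
        exact (measurable_pi_apply i) hGm.compl
      · have : {ω : ℕ → S | 1 ≤ i → i ≤ t → ω i ∉ G} = Set.univ := by
          ext ω; simp [h2]
        rw [this]; exact MeasurableSet.univ
    · have : {ω : ℕ → S | 1 ≤ i → i ≤ t → ω i ∉ G} = Set.univ := by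
        ext ω; simp [h1]
      rw [this]; exact MeasurableSet.univ
  set C : (Fin (t+1) → S) → Set (ℕ → S) :=
    fun f => {ω : ℕ → S | ∀ i : Fin (t+1), ω i = f i} with hC
  have hCm : ∀ f, MeasurableSet (C f) := by
    intro f
    have : C f = ⋂ i : Fin (t+1), (fun ω : ℕ → S => ω i) ⁻¹' {f i} := by
      ext ω; simp [hC]
    rw [this]
    exact MeasurableSet.iInter fun i =>
      (measurable_pi_apply (i : ℕ)) (measurableSet_singleton (f i))
  have hcover : A = ⋃ f : Fin (t+1) → S, A ∩ C f := by
    ext ω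
    constructor
    · intro hω
      exact Set.mem_iUnion.mpr ⟨fun i => ω i, hω, fun i => rfl⟩
    · rintro ⟨_, ⟨f, rfl⟩, hω, -⟩
      exact hω
  have hdisj : Pairwise (Function.onFun Disjoint fun f => A ∩ C f) := by
    intro f g hfg
    refine Set.disjoint_left.mpr ?_
    rintro ω ⟨-, hωf⟩ ⟨-, hωg⟩
    exact hfg (funext fun i => (hωf i).symm.trans (hωg i))
  rw [hcover, measure_iUnion hdisj fun f => hAm.inter (hCm f)]
  refine tsum_congr fun f => ?_
  by_cases hf : ∀ i : Fin (t+1), 1 ≤ (i : ℕ) → f i ∉ G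
  · -- A ∩ C f = C f and compute via hP
    have hsub : C f ⊆ A := by
      intro ω hω i h1 h2
      have : ω i = f ⟨i, Nat.lt_succ_of_le h2⟩ := hω ⟨i, Nat.lt_succ_of_le h2⟩
      rw [this]
      exact hf ⟨i, Nat.lt_succ_of_le h2⟩ h1
    rw [Set.inter_eq_self_of_subset_right hsub]
    -- extension of f to ℕ
    set F : ℕ → S := fun i => f ⟨min i t, Nat.lt_succ_of_le (min_le_right i t)⟩ with hF
    have hCF : C f = {ω : ℕ → S | ∀ i ≤ t, ω i = F i} := by
      ext ω
      constructor
      · intro hω i hi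
        rw [hω ⟨i, Nat.lt_succ_of_le hi⟩]
        exact congrArg f (Fin.ext (Nat.min_eq_left hi).symm)
      · intro hω i
        rw [hω i (Nat.lt_succ_iff.mp i.isLt)]
        exact congrArg f (Fin.ext (Nat.min_eq_left (Nat.lt_succ_iff.mp i.isLt)))
    rw [hCF, hP s t F]
    have hF0 : F 0 = f 0 := congrArg f (Fin.ext (Nat.zero_min t))
    have hprod : ∏ i ∈ Finset.range t, κ (F i) {F (i + 1)}
        = ∏ i : Fin t, κ (f i.castSucc) {f i.succ} := by
      rw [← Fin.prod_univ_eq_prod_range (fun i => κ (F i) {F (i+1)}) t]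
      refine Finset.prod_congr rfl fun i _ => ?_
      have h1 : F (i : ℕ) = f i.castSucc :=
        congrArg f (Fin.ext (Nat.min_eq_left (Nat.le_of_lt i.isLt)))
      have h2 : F ((i : ℕ) + 1) = f i.succ :=
        congrArg f (Fin.ext (Nat.min_eq_left (Nat.succ_le_of_lt i.isLt)))
      rw [h1, h2]
    rw [hprod]
    by_cases h0 : f 0 = s
    · rw [if_pos (hF0.trans h0), if_pos ⟨h0, hf⟩, one_mul]
    · rw [if_neg (fun h => h0 (hF0.symm.trans h)), if_neg (fun h => h0 h.1), zero_mul]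
  · -- A ∩ C f = ∅
    have : A ∩ C f = ∅ := by
      push_neg at hf
      obtain ⟨i, h1, h2⟩ := hf
      ext ω
      simp only [Set.mem_inter_iff, Set.mem_empty_iff_false, iff_false, not_and]
      intro hωA hωC
      have hωi : ω i = f i := hωC i
      exact hωA (i : ℕ) h1 (Nat.lt_succ_iff.mp i.isLt) (hωi ▸ h2)
    rw [this, if_neg (fun h => hf h.2)]
    exact measure_empty

/-- **Bellman-style recursion for expected hitting times.** Let `S` be a countable state
space, `κ` a Markov transition kernel on `S`, and for each `s` let `P s` be the law on
trajectories `ℕ → S` of the homogeneous Markov chain started at `s` with transitions `κ`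
(characterized, as in the Ionescu–Tulcea construction, by its finite-dimensional
distributions `hP`), with `E_s` the corresponding expectation valued in `[0, ∞]`.
Let `D` be the first hitting time of `G ⊆ S` at a positive time, valued in `ℕ ∪ {∞}`.
Then `E_s[D_G] = 1 + Σ_{s' ∉ G} κ(s)({s'}) · E_{s'}[D_G]` (states `s' ∈ G` contribute `0`,
matching the convention `D = 0` upon reaching the target). -/
theorem expected_hitting_time_bellman_recursion
    {S : Type*} [MeasurableSpace S] [Countable S] [MeasurableSingletonClass S]
    (κ : Kernel S S) [IsMarkovKernel κ]
    (P : S → Measure (ℕ → S)) [∀ s, IsProbabilityMeasure (P s)]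
    (hP : ∀ (s : S) (n : ℕ) (f : ℕ → S),
      P s {ω | ∀ i ≤ n, ω i = f i}
        = (if f 0 = s then 1 else 0) * ∏ i ∈ Finset.range n, κ (f i) {f (i + 1)})
    (G : Set S)
    (D : (ℕ → S) → ℕ∞)
    (hD : ∀ ω, D ω = sInf {u : ℕ∞ | ∃ t : ℕ, (t : ℕ∞) = u ∧ 1 ≤ t ∧ ω t ∈ G}) :
    ∀ s : S,
      ∫⁻ ω, (D ω : ℝ≥0∞) ∂(P s)
        = 1 + ∑' s' : {s' : S // s' ∉ G},
            κ s {(s' : S)} * ∫⁻ ω, (D ω : ℝ≥0∞) ∂(P (s' : S)) := by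
  have hGm : MeasurableSet G := (Set.to_countable G).measurableSet
  set A : ℕ → Set (ℕ → S) :=
    fun t => {ω : ℕ → S | ∀ i : ℕ, 1 ≤ i → i ≤ t → ω i ∉ G} with hAdef
  -- tail events
  have hAeq : ∀ t : ℕ, {ω : ℕ → S | (t : ℕ∞) < D ω} = A t := by
    intro t
    ext ω
    rw [Set.mem_setOf_eq, hD ω]
    constructor
    · intro h i h1 h2 hiG
      have hmem : ((i : ℕ∞)) ∈ {u : ℕ∞ | ∃ t' : ℕ, (t' : ℕ∞) = u ∧ 1 ≤ t' ∧ ω t' ∈ G} :=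
        ⟨i, rfl, h1, hiG⟩
      have := sInf_le hmem
      have hle : (i : ℕ∞) ≤ (t : ℕ∞) := by exact_mod_cast h2
      exact absurd (lt_of_lt_of_le h (this.trans hle)) (lt_irrefl _)
    · intro h
      have hlb : ((t : ℕ∞) + 1) ≤ sInf {u : ℕ∞ | ∃ t' : ℕ, (t' : ℕ∞) = u ∧ 1 ≤ t' ∧ ω t' ∈ G} := by
        refine le_sInf ?_
        rintro u ⟨t', rfl, h1, hG'⟩
        have ht' : ¬ t' ≤ t := fun hle => h t' h1 hle hG'
        have : t + 1 ≤ t' := by omega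
        exact_mod_cast this
      have hlt : (t : ℕ∞) < (t : ℕ∞) + 1 := by
        exact_mod_cast Nat.lt_succ_self t
      exact lt_of_lt_of_le hlt hlb
  have hAm : ∀ t : ℕ, MeasurableSet (A t) := by
    intro t
    have : A t = ⋂ (i : ℕ), {ω : ℕ → S | 1 ≤ i → i ≤ t → ω i ∉ G} := by
      ext ω; simp [hAdef, Set.mem_iInter]
    rw [this]
    refine MeasurableSet.iInter fun i => ?_
    by_cases h1 : 1 ≤ i
    · by_cases h2 : i ≤ t
      · have : {ω : ℕ → S | 1 ≤ i → i ≤ t → ω i ∉ G}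
            = (fun ω : ℕ → S => ω i) ⁻¹' Gᶜ := by
          ext ω; simp [h1, h2]
        rw [this]
        exact (measurable_pi_apply i) hGm.compl
      · have : {ω : ℕ → S | 1 ≤ i → i ≤ t → ω i ∉ G} = Set.univ := by
          ext ω; simp [h2]
        rw [this]; exact MeasurableSet.univ
    · have : {ω : ℕ → S | 1 ≤ i → i ≤ t → ω i ∉ G} = Set.univ := by
        ext ω; simp [h1]
      rw [this]; exact MeasurableSet.univ
  -- the integral as a tail sum
  have hint : ∀ s : S, ∫⁻ ω, (D ω : ℝ≥0∞) ∂(P s) = ∑' t : ℕ, hittingW κ G t s := by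
    intro s
    have h1 : ∫⁻ ω, (D ω : ℝ≥0∞) ∂(P s)
        = ∫⁻ ω, ∑' t : ℕ, (A t).indicator (fun _ => (1 : ℝ≥0∞)) ω ∂(P s) := by
      refine lintegral_congr fun ω => ?_
      rw [enat_coe_eq_tsum (D ω)]
      refine tsum_congr fun t => ?_
      rw [Set.indicator_apply]
      have hmem : ω ∈ A t ↔ (t : ℕ∞) < D ω := by
        rw [← hAeq t]; exact Iff.rfl
      by_cases h : (t : ℕ∞) < D ω
      · rw [if_pos h, if_pos (hmem.mpr h)]
      · rw [if_neg h, if_neg (fun hh => h (hmem.mp hh))]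
    rw [h1, lintegral_tsum fun t => (measurable_const.indicator (hAm t)).aemeasurable]
    refine tsum_congr fun t => ?_
    rw [lintegral_indicator_const (hAm t) 1, one_mul]
    rw [measure_avoid κ P hP G t s, tn_eq_w κ G t s]
  intro s
  rw [hint s]
  rw [tsum_eq_zero_add' ENNReal.summable]
  have hW0 : hittingW κ G 0 s = 1 := rfl
  rw [hW0]
  congr 1
  have hWs : ∀ t : ℕ, hittingW κ G (t+1) s
      = ∑' s' : S, if s' ∉ G then κ s {s'} * hittingW κ G t s' else 0 := fun t => rfl
  rw [tsum_congr hWs, ENNReal.tsum_comm]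
  have hswap : ∀ s' : S,
      (∑' t : ℕ, if s' ∉ G then κ s {s'} * hittingW κ G t s' else 0)
        = Set.indicator {s' : S | s' ∉ G}
            (fun s' => κ s {s'} * ∫⁻ ω, (D ω : ℝ≥0∞) ∂(P s')) s' := by
    intro s'
    rw [Set.indicator_apply]
    simp only [Set.mem_setOf_eq]
    by_cases hs' : s' ∉ G
    · rw [if_pos hs', hint s', ← ENNReal.tsum_mul_left]
      refine tsum_congr fun t => if_pos hs'
    · rw [if_neg hs']
      rw [tsum_congr fun t => if_neg hs']
      exact tsum_zero
  rw [tsum_congr hswap, ← tsum_subtype {s' : S | s' ∉ G}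
    (fun s' => κ s {s'} * ∫⁻ ω, (D ω : ℝ≥0∞) ∂(P s'))]
  rfl
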